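/- (Gain estimate, second inequality) Let J ∈ ℝ^{m×n}, L ∈ ℝ^{p×n}, x, x* ∈ ℝⁿ, F, y^δ ∈ ℝ^m, λ > 0, θ > 1, q ∈ (0,1). Suppose d ∈ ℝⁿ satisfies (JᵀJ + λ LᵀL) d = −Jᵀ(F − y^δ), that ‖F − y^δ + J d‖ = q‖F − y^δ‖, and that ‖F − y^δ + J(x* − x)‖ ≤ (q/θ)‖F − y^δ‖. Set x⁺ := x + d. Then ‖x − x*‖_L² − ‖x⁺ − x*‖_L² ≥ (2(θ−1)/(θλ))·‖F − y^δ + J d‖² = (2(θ−1)q²/(θλ))·‖F − y^δ‖². -/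

import Mathlib

/-! With `s := F - yδ + J d` and `w := F - yδ + J (x* - x)`, the normal equation says
`Jᵀ s = -λ LᵀL d`, which turns the seminorm gain into the exact identity
`λ (‖x - x*‖_L² - ‖x⁺ - x*‖_L²) = 2 ⟨s, s - w⟩ + λ ‖d‖_L²`.
The hypotheses give `θ ‖w‖ ≤ q ‖F - yδ‖ = ‖s‖`, so by Cauchy–Schwarz
`⟨s, s - w⟩ ≥ ‖s‖² - ‖s‖‖w‖ ≥ (1 - 1/θ) ‖s‖²`. -/

open Matrix

noncomputable def euclNorm {k : ℕ} (v : Fin k → ℝ) : ℝ :=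
  ‖(EuclideanSpace.equiv (Fin k) ℝ).symm v‖

section NormalEquation

variable {R ι κ μ : Type*} [CommRing R] [Fintype ι] [Fintype κ] [Fintype μ]
  {J : Matrix κ ι R} {L : Matrix μ ι R} {lam : R} {r : κ → R} {d : ι → R}

theorem mul_dotProduct_mulVec_eq_of_normal_eq
    (hd : (Jᵀ * J + lam • (Lᵀ * L)) *ᵥ d = -(Jᵀ *ᵥ r)) (v : ι → R) :
    lam * (L *ᵥ d ⬝ᵥ L *ᵥ v) = -((r + J *ᵥ d) ⬝ᵥ J *ᵥ v) := by
  have hd' : lam • ((Lᵀ * L) *ᵥ d) = -(Jᵀ *ᵥ (r + J *ᵥ d)) := by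
    rw [mulVec_add, mulVec_mulVec, ← smul_mulVec, neg_add, ← hd, add_mulVec]
    abel
  rw [dotProduct_mulVec, ← mulVec_transpose, mulVec_mulVec, ← smul_eq_mul, ← smul_dotProduct,
    dotProduct_mulVec (r + J *ᵥ d), ← mulVec_transpose, hd', neg_dotProduct]

theorem mul_seminorm_gain_eq_of_normal_eq
    (hd : (Jᵀ * J + lam • (Lᵀ * L)) *ᵥ d = -(Jᵀ *ᵥ r)) (x xstar : ι → R) :
    lam * (L *ᵥ (x - xstar) ⬝ᵥ L *ᵥ (x - xstar) - L *ᵥ (x + d - xstar) ⬝ᵥ L *ᵥ (x + d - xstar))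
      = 2 * ((r + J *ᵥ d) ⬝ᵥ J *ᵥ (x + d - xstar)) + lam * (L *ᵥ d ⬝ᵥ L *ᵥ d) := by
  have hsplit : L *ᵥ (x - xstar) = L *ᵥ (x + d - xstar) - L *ᵥ d := by
    rw [← mulVec_sub]; abel_nf
  rw [hsplit, sub_dotProduct, dotProduct_sub, dotProduct_sub,
    dotProduct_comm (L *ᵥ (x + d - xstar)) (L *ᵥ d)]
  linear_combination (-2 : R) * mul_dotProduct_mulVec_eq_of_normal_eq hd (x + d - xstar)

end NormalEquation

theorem inner_sub_ge_of_mul_norm_le {E : Type*} [NormedAddCommGroup E] [InnerProductSpace ℝ E]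
    {s w : E} {θ : ℝ} (hθ : 0 < θ) (hw : θ * ‖w‖ ≤ ‖s‖) :
    (θ - 1) / θ * ‖s‖ ^ 2 ≤ inner ℝ s (s - w) := by
  have hcs : inner ℝ s w ≤ ‖s‖ * ‖w‖ := real_inner_le_norm s w
  have hsw : ‖s‖ * (θ * ‖w‖) ≤ ‖s‖ * ‖s‖ := mul_le_mul_of_nonneg_left hw (norm_nonneg s)
  rw [inner_sub_right, real_inner_self_eq_norm_sq, div_mul_eq_mul_div, div_le_iff₀ hθ]
  nlinarith

theorem dotProduct_eq_inner {k : ℕ} (u v : Fin k → ℝ) :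
    u ⬝ᵥ v = inner ℝ ((EuclideanSpace.equiv (Fin k) ℝ).symm u)
      ((EuclideanSpace.equiv (Fin k) ℝ).symm v) := by
  simp [PiLp.inner_apply, dotProduct, mul_comm]

theorem euclNorm_sq {k : ℕ} (v : Fin k → ℝ) : euclNorm v ^ 2 = v ⬝ᵥ v := by
  rw [euclNorm, ← real_inner_self_eq_norm_sq, dotProduct_eq_inner]

theorem dotProduct_sub_ge_of_mul_euclNorm_le {k : ℕ} {s w : Fin k → ℝ} {θ : ℝ} (hθ : 0 < θ)
    (hw : θ * euclNorm w ≤ euclNorm s) : (θ - 1) / θ * euclNorm s ^ 2 ≤ s ⬝ᵥ (s - w) := by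
  rw [dotProduct_eq_inner, map_sub]
  exact inner_sub_ge_of_mul_norm_le hθ hw

theorem gain_estimate_second_general (m n p : ℕ)
    (J : Matrix (Fin m) (Fin n) ℝ) (L : Matrix (Fin p) (Fin n) ℝ)
    (x xstar : Fin n → ℝ) (F yδ : Fin m → ℝ)
    (lam θ q : ℝ) (hlam : 0 < lam) (hθ : 1 < θ)
    (d : Fin n → ℝ)
    (hd : (Jᵀ * J + lam • (Lᵀ * L)).mulVec d = -(Jᵀ.mulVec (F - yδ)))
    (hqc : euclNorm (F - yδ + J.mulVec d) = q * euclNorm (F - yδ))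
    (hnear : euclNorm (F - yδ + J.mulVec (xstar - x)) ≤ (q / θ) * euclNorm (F - yδ)) :
    euclNorm (L.mulVec (x - xstar)) ^ 2 - euclNorm (L.mulVec (x + d - xstar)) ^ 2 ≥
      (2 * (θ - 1) / (θ * lam)) * euclNorm (F - yδ + J.mulVec d) ^ 2 ∧
    (2 * (θ - 1) / (θ * lam)) * euclNorm (F - yδ + J.mulVec d) ^ 2 =
      (2 * (θ - 1) * q ^ 2 / (θ * lam)) * euclNorm (F - yδ) ^ 2 := by
  set s := F - yδ + J *ᵥ d
  set w := F - yδ + J *ᵥ (xstar - x)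
  have hθ0 : 0 < θ := zero_lt_one.trans hθ
  have hstep : J *ᵥ (x + d - xstar) = s - w := by
    rw [show x + d - xstar = d - (xstar - x) by abel, mulVec_sub]
    simp only [s, w]
    abel
  have hw : θ * euclNorm w ≤ euclNorm s := by
    calc θ * euclNorm w ≤ θ * (q / θ * euclNorm (F - yδ)) := by gcongr
      _ = euclNorm s := by rw [hqc]; field_simp
  have hcross := dotProduct_sub_ge_of_mul_euclNorm_le hθ0 hw
  have hgain := mul_seminorm_gain_eq_of_normal_eq hd x xstar
  have hLd : 0 ≤ lam * (L *ᵥ d ⬝ᵥ L *ᵥ d) := by rw [← euclNorm_sq]; positivity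
  refine ⟨?_, by rw [hqc]; ring⟩
  rw [euclNorm_sq] at hcross
  rw [ge_iff_le, euclNorm_sq, euclNorm_sq, euclNorm_sq]
  calc 2 * (θ - 1) / (θ * lam) * (s ⬝ᵥ s) = 2 * ((θ - 1) / θ * (s ⬝ᵥ s)) / lam := by
        field_simp
    _ ≤ (2 * (s ⬝ᵥ (s - w)) + lam * (L *ᵥ d ⬝ᵥ L *ᵥ d)) / lam := by gcongr; linarith
    _ = _ := by rw [← hstep, ← hgain, mul_div_cancel_left₀ _ hlam.ne']

/-- Gain estimate, second inequality: under the same hypotheses as the first gain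
estimate, `‖x − x*‖_L² − ‖x⁺ − x*‖_L² ≥ (2(θ−1)/(θλ))‖F − yδ + Jd‖²
= (2(θ−1)q²/(θλ))‖F − yδ‖²`. -/
theorem gain_estimate_second (m n p : ℕ)
    (J : Matrix (Fin m) (Fin n) ℝ) (L : Matrix (Fin p) (Fin n) ℝ)
    (x xstar : Fin n → ℝ) (F yδ : Fin m → ℝ)
    (lam θ q : ℝ) (hlam : 0 < lam) (hθ : 1 < θ) (hq0 : 0 < q) (hq1 : q < 1)
    (d : Fin n → ℝ)
    (hd : (Jᵀ * J + lam • (Lᵀ * L)).mulVec d = -(Jᵀ.mulVec (F - yδ)))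
    (hqc : euclNorm (F - yδ + J.mulVec d) = q * euclNorm (F - yδ))
    (hnear : euclNorm (F - yδ + J.mulVec (xstar - x)) ≤ (q / θ) * euclNorm (F - yδ)) :
    euclNorm (L.mulVec (x - xstar)) ^ 2 - euclNorm (L.mulVec (x + d - xstar)) ^ 2 ≥
      (2 * (θ - 1) / (θ * lam)) * euclNorm (F - yδ + J.mulVec d) ^ 2 ∧
    (2 * (θ - 1) / (θ * lam)) * euclNorm (F - yδ + J.mulVec d) ^ 2 =
      (2 * (θ - 1) * q ^ 2 / (θ * lam)) * euclNorm (F - yδ) ^ 2 :=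
  gain_estimate_second_general m n p J L x xstar F yδ lam θ q hlam hθ d hd hqc hnear
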